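/- Let N, d, d' be positive natural numbers, let A be an N×N real matrix with all entries nonnegative, let ε be a real number with ε > -1, let W be a d×d' real matrix, let X be an N×d real feature matrix, and let S be a nonempty subset of {1,…,N}. Then: (i) for every N×d real matrix X̂ (a feature transformation of the graph) there exists p̂ ∈ ℝ^d such that z_{A,ε,W}(X') = z_{A,ε,W}(X̂); and (ii) for every N×N real matrix Â (a link transformation of the graph) there exists p̂ ∈ ℝ^d such that z_{A,ε,W}(X') = z_{Â,ε,W}(X); where in each case X' is the SUPT-prompted feature matrix obtained from X, S and p̂. (SUPT on a nonempty node subset can reproduce the effect of an arbitrary feature transformation and of an arbitrary link transformation of the input graph on the sum-pooled single-layer GIN embedding.) -/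

import Mathlib

open Matrix BigOperators

/-- Single-layer GIN graph embedding with sum readout:
the `j'`-th entry is the sum of the rows of `(A + (1+ε)•I) * X * W`. -/
noncomputable def ginEmbed {N d d' : ℕ} (A : Matrix (Fin N) (Fin N) ℝ) (ε : ℝ)
    (W : Matrix (Fin d) (Fin d') ℝ) (X : Matrix (Fin N) (Fin d) ℝ) : Fin d' → ℝ :=
  fun j' => ∑ i, ((A + (1 + ε) • (1 : Matrix (Fin N) (Fin N) ℝ)) * X * W) i j'

/-- SUPT-prompted feature matrix: add the prompt vector `phat` to the rows indexed by `S`. -/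
noncomputable def suptPrompt {N d : ℕ} (X : Matrix (Fin N) (Fin d) ℝ) (S : Finset (Fin N))
    (phat : Fin d → ℝ) : Matrix (Fin N) (Fin d) ℝ :=
  Matrix.of fun i j => if i ∈ S then X i j + phat j else X i j

/-- GPF-prompted feature matrix: add the prompt vector `p` to every row. -/
noncomputable def gpfPrompt {N d : ℕ} (X : Matrix (Fin N) (Fin d) ℝ)
    (p : Fin d → ℝ) : Matrix (Fin N) (Fin d) ℝ :=
  Matrix.of fun i j => X i j + p j

/-!
Write `M = A + (1+ε)•1` and `𝟙` for the all-ones vector, so that `z_{A,ε,W}(X) = (𝟙ᵀ M X) W`.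
Prompting the rows in `S` with `p̂` adds `c • (p̂ W)` to the embedding, where
`c = ∑_{k ∈ S} (𝟙ᵀ M)_k`; nonnegativity of `A` and `ε > -1` make every column sum of `M`
positive, so `c > 0`. Both targets have the form `v W` (`v = 𝟙ᵀ M X̂`, resp.
`v = 𝟙ᵀ (Â+(1+ε)•1) X`), and `p̂ = c⁻¹ • (v - 𝟙ᵀ M X)` reaches it.
-/

variable {N d d' : ℕ}

lemma ginEmbed_eq_vecMul (A : Matrix (Fin N) (Fin N) ℝ) (ε : ℝ) (W : Matrix (Fin d) (Fin d') ℝ)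
    (X : Matrix (Fin N) (Fin d) ℝ) :
    ginEmbed A ε W X = (1 ᵥ* (A + (1 + ε) • (1 : Matrix (Fin N) (Fin N) ℝ)) ᵥ* X) ᵥ* W := by
  ext j'
  simp only [ginEmbed, vecMul_vecMul]
  simp [vecMul, dotProduct]

lemma suptPrompt_eq_add_vecMulVec (X : Matrix (Fin N) (Fin d) ℝ) (S : Finset (Fin N))
    (phat : Fin d → ℝ) :
    suptPrompt X S phat = X + vecMulVec (fun i => if i ∈ S then 1 else 0) phat := by
  ext i j
  by_cases hi : i ∈ S <;> simp [suptPrompt, vecMulVec_apply, hi]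

lemma ginEmbed_suptPrompt (A : Matrix (Fin N) (Fin N) ℝ) (ε : ℝ) (W : Matrix (Fin d) (Fin d') ℝ)
    (X : Matrix (Fin N) (Fin d) ℝ) (S : Finset (Fin N)) (phat : Fin d → ℝ) :
    ginEmbed A ε W (suptPrompt X S phat) = ginEmbed A ε W X +
      (∑ k ∈ S, (1 ᵥ* (A + (1 + ε) • (1 : Matrix (Fin N) (Fin N) ℝ))) k) • (phat ᵥ* W) := by
  have hdot (u : Fin N → ℝ) : u ⬝ᵥ (fun i => if i ∈ S then 1 else 0) = ∑ k ∈ S, u k := by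
    simp [dotProduct, Finset.sum_ite_mem]
  rw [ginEmbed_eq_vecMul, ginEmbed_eq_vecMul, suptPrompt_eq_add_vecMulVec, vecMul_add,
    vecMul_vecMulVec, hdot, add_vecMul, smul_vecMul]

lemma exists_suptPrompt_ginEmbed_eq_vecMul {A : Matrix (Fin N) (Fin N) ℝ} {ε : ℝ}
    (W : Matrix (Fin d) (Fin d') ℝ) (X : Matrix (Fin N) (Fin d) ℝ) {S : Finset (Fin N)}
    (hS : ∑ k ∈ S, (1 ᵥ* (A + (1 + ε) • (1 : Matrix (Fin N) (Fin N) ℝ))) k ≠ 0)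
    (v : Fin d → ℝ) :
    ∃ phat : Fin d → ℝ, ginEmbed A ε W (suptPrompt X S phat) = v ᵥ* W := by
  refine ⟨(∑ k ∈ S, (1 ᵥ* (A + (1 + ε) • (1 : Matrix (Fin N) (Fin N) ℝ))) k)⁻¹ •
    (v - 1 ᵥ* (A + (1 + ε) • (1 : Matrix (Fin N) (Fin N) ℝ)) ᵥ* X), ?_⟩
  rw [ginEmbed_suptPrompt, ginEmbed_eq_vecMul, smul_vecMul, smul_smul, mul_inv_cancel₀ hS, one_smul,
    ← add_vecMul, add_sub_cancel]

lemma one_vecMul_add_smul_one_pos {n : Type*} [Fintype n] [DecidableEq n] {A : Matrix n n ℝ}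
    (hA : ∀ i k, 0 ≤ A i k) {ε : ℝ} (hε : -1 < ε) (k : n) :
    0 < (1 ᵥ* (A + (1 + ε) • (1 : Matrix n n ℝ))) k := by
  have hcol : 0 ≤ (1 ᵥ* A) k := by
    simpa [vecMul, dotProduct] using Finset.sum_nonneg fun i _ => hA i k
  rw [vecMul_add, vecMul_smul, vecMul_one]
  simp only [Pi.add_apply, Pi.smul_apply, Pi.one_apply, smul_eq_mul, mul_one]
  linarith

theorem supt_reproduces_feature_and_link_transformations_general
    (N d d' : ℕ)
    (A : Matrix (Fin N) (Fin N) ℝ) (hA : ∀ i k, 0 ≤ A i k)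
    (ε : ℝ) (hε : -1 < ε)
    (W : Matrix (Fin d) (Fin d') ℝ)
    (X : Matrix (Fin N) (Fin d) ℝ)
    (S : Finset (Fin N)) (hS : S.Nonempty) :
    (∀ Xhat : Matrix (Fin N) (Fin d) ℝ, ∃ phat : Fin d → ℝ,
        ginEmbed A ε W (suptPrompt X S phat) = ginEmbed A ε W Xhat) ∧
    (∀ Ahat : Matrix (Fin N) (Fin N) ℝ, ∃ phat : Fin d → ℝ,
        ginEmbed A ε W (suptPrompt X S phat) = ginEmbed Ahat ε W X) := by
  have hmass : ∑ k ∈ S, (1 ᵥ* (A + (1 + ε) • (1 : Matrix (Fin N) (Fin N) ℝ))) k ≠ 0 :=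
    (Finset.sum_pos (fun k _ => one_vecMul_add_smul_one_pos hA hε k) hS).ne'
  refine ⟨fun Xhat => ?_, fun Ahat => ?_⟩
  · rw [ginEmbed_eq_vecMul A ε W Xhat]
    exact exists_suptPrompt_ginEmbed_eq_vecMul W X hmass _
  · rw [ginEmbed_eq_vecMul Ahat ε W X]
    exact exists_suptPrompt_ginEmbed_eq_vecMul W X hmass _

/-- SUPT on a nonempty node subset can reproduce the effect of an arbitrary feature
transformation and of an arbitrary link transformation of the input graph on the
sum-pooled single-layer GIN embedding. -/
theorem supt_reproduces_feature_and_link_transformations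
    (N d d' : ℕ) (hN : 0 < N) (hd : 0 < d) (hd' : 0 < d')
    (A : Matrix (Fin N) (Fin N) ℝ) (hA : ∀ i k, 0 ≤ A i k)
    (ε : ℝ) (hε : -1 < ε)
    (W : Matrix (Fin d) (Fin d') ℝ)
    (X : Matrix (Fin N) (Fin d) ℝ)
    (S : Finset (Fin N)) (hS : S.Nonempty) :
    (∀ Xhat : Matrix (Fin N) (Fin d) ℝ, ∃ phat : Fin d → ℝ,
        ginEmbed A ε W (suptPrompt X S phat) = ginEmbed A ε W Xhat) ∧
    (∀ Ahat : Matrix (Fin N) (Fin N) ℝ, ∃ phat : Fin d → ℝ,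
        ginEmbed A ε W (suptPrompt X S phat) = ginEmbed Ahat ε W X) :=
  supt_reproduces_feature_and_link_transformations_general N d d' A hA ε hε W X S hS
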